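/- arXiv:2002.01615 — 2 statements merged into one kernel-verified Lean document; each statement's English description precedes it below -/
import Mathlib

section
/- Let S¹ = (a¹, C¹), S² = (a², C²), S³ = (a³, C³) be three MMSets, and for r, s ∈ {1,2,3} define AE₁(S^r, S^s) := 2 ∑_{i,j} a^r_i a^s_j W^{rs}(i,j) − ∑_{i,j} a^r_i a^r_j W^{rr}(i,j) − ∑_{i,j} a^s_i a^s_j W^{ss}(i,j), where W^{rs}(i,j) is the infimum over Q ∈ U(a^r, a^s) of ∑_{k,l} Q_{kl} |C^r_{ik} − C^s_{jl}|. Then AE₁ satisfies the pseudometric triangle inequality after taking square roots: √AE₁(S¹,S³) ≤ √AE₁(S¹,S²) + √AE₁(S²,S³). -/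
open Finset

/-- A probability vector: nonnegative entries summing to 1. -/
def IsProbVec {n : ℕ} (a : Fin n → ℝ) : Prop :=
  (∀ i, 0 ≤ a i) ∧ ∑ i, a i = 1

/-- The transportation polytope `U(a,b)`. -/
def transportPolytope {n m : ℕ} (a : Fin n → ℝ) (b : Fin m → ℝ) :
    Set (Fin n → Fin m → ℝ) :=
  {P | (∀ i j, 0 ≤ P i j) ∧ (∀ i, ∑ j, P i j = a i) ∧ (∀ j, ∑ i, P i j = b j)}

/-- The 1-Wasserstein distance between the anchor distributions of row `i` of `C`
(weighted by `a`) and row `j` of `D` (weighted by `b`). -/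
noncomputable def anchorW1 {n m : ℕ} (a : Fin n → ℝ) (b : Fin m → ℝ)
    (C : Fin n → Fin n → ℝ) (D : Fin m → Fin m → ℝ) (i : Fin n) (j : Fin m) : ℝ :=
  sInf ((fun Q => ∑ k, ∑ l, Q k l * |C i k - D j l|) '' transportPolytope a b)

/-- The Anchor Energy distance `AE₁` between two MMSets. -/
noncomputable def AE1 {n m : ℕ} (a : Fin n → ℝ) (b : Fin m → ℝ)
    (C : Fin n → Fin n → ℝ) (D : Fin m → Fin m → ℝ) : ℝ :=
  2 * ∑ i, ∑ j, a i * b j * anchorW1 a b C D i j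
    - ∑ i, ∑ j, a i * a j * anchorW1 a a C C i j
    - ∑ i, ∑ j, b i * b j * anchorW1 b b D D i j

/-!
On the line, the 1-Wasserstein distance between two discrete measures is the L¹ distance of their
CDFs: the monotone (quantile) coupling costs exactly that much, and integrating
`|1[x ≤ t] - 1[w ≤ t]|` against any coupling shows that none costs less. Since
`|F - G| = F + G - 2 min F G` and `min F G` is the area of the intersection of the subgraphs,
`∫ |F - G|` is the squared L² distance of the subgraph indicators, so every anchor distribution
becomes a point of the Hilbert space `L²(ℝ²)` and `W₁` a squared distance. For probability weights,
`AE₁` is then twice the squared distance between the weighted means of the anchor points, and the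
triangle inequality for `√AE₁` is the one in `L²(ℝ²)`.
-/

open MeasureTheory Set Function
open scoped RealInnerProductSpace

noncomputable section

lemma abs_sub_eq_add_sub_two_mul_min (a b : ℝ) : |a - b| = a + b - 2 * min a b := by
  rw [← max_sub_min_eq_abs', ← min_add_max a b]
  ring

section TruncCdf
variable {ι κ : Type*} [Fintype ι] [Fintype κ]

lemma indicator_Ico_of_lt {x M t : ℝ} (ht : t < M) :
    (Ico x M).indicator (1 : ℝ → ℝ) t = if x ≤ t then 1 else 0 := by
  simp [indicator, ht]

lemma integrable_indicator_Ico (x M : ℝ) : Integrable ((Ico x M).indicator (1 : ℝ → ℝ)) :=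
  (integrable_indicator_iff measurableSet_Ico).2 (integrableOn_const (by simp) (by simp))

lemma integral_abs_indicator_Ico_sub {x y M : ℝ} (hx : x ≤ M) (hy : y ≤ M) :
    ∫ t, |(Ico x M).indicator (1 : ℝ → ℝ) t - (Ico y M).indicator 1 t| = |x - y| := by
  wlog hxy : x ≤ y generalizing x y
  · simpa only [abs_sub_comm] using this hy hx (le_of_not_ge hxy)
  have h : ∀ t, |(Ico x M).indicator (1 : ℝ → ℝ) t - (Ico y M).indicator 1 t|
      = (Ico x y).indicator 1 t := fun t => by
    by_cases h1 : x ≤ t <;> by_cases h2 : y ≤ t <;> by_cases h3 : t < M <;>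
      simp [indicator, h1, h2, h3] <;> linarith
  simp only [h, integral_indicator_one measurableSet_Ico, Real.volume_real_Ico,
    max_eq_left (sub_nonneg.2 hxy), abs_of_nonpos (sub_nonpos.2 hxy), neg_sub]

/-- The CDF of `∑ k, a k • δ (x k)`, cut off at `M` to make it integrable. -/
def truncCdf (a x : ι → ℝ) (M t : ℝ) : ℝ :=
  ∑ k, a k * (Ico (x k) M).indicator 1 t

lemma truncCdf_of_lt (a x : ι → ℝ) {M t : ℝ} (ht : t < M) :
    truncCdf a x M t = ∑ k with x k ≤ t, a k := by
  simp [truncCdf, indicator_Ico_of_lt ht, sum_filter]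

lemma truncCdf_nonneg {a : ι → ℝ} (ha : ∀ k, 0 ≤ a k) (x : ι → ℝ) (M : ℝ) :
    0 ≤ truncCdf a x M := fun _ =>
  sum_nonneg fun k _ => mul_nonneg (ha k) (indicator_nonneg (fun _ _ => zero_le_one) _)

lemma measurable_truncCdf (a x : ι → ℝ) (M : ℝ) : Measurable (truncCdf a x M) :=
  Finset.measurable_sum _ fun _ _ =>
    measurable_const.mul (measurable_one.indicator measurableSet_Ico)

lemma integrable_truncCdf (a x : ι → ℝ) (M : ℝ) : Integrable (truncCdf a x M) :=
  integrable_finsetSum _ fun k _ => (integrable_indicator_Ico _ _).const_mul (a k)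

lemma truncCdf_comp_equiv (a x : ι → ℝ) (e : κ ≃ ι) (M : ℝ) :
    truncCdf (a ∘ e) (x ∘ e) M = truncCdf a x M :=
  funext fun _ => e.sum_comp fun k => a k * (Ico (x k) M).indicator 1 _

lemma integral_sum_sum_mul_abs_indicator_sub (Q : ι → κ → ℝ) {x : ι → ℝ} {w : κ → ℝ} {M : ℝ}
    (hx : ∀ k, x k ≤ M) (hw : ∀ l, w l ≤ M) :
    ∫ t, ∑ k, ∑ l, Q k l * |(Ico (x k) M).indicator (1 : ℝ → ℝ) t - (Ico (w l) M).indicator 1 t|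
      = ∑ k, ∑ l, Q k l * |x k - w l| := by
  have hint : ∀ k l, Integrable fun t =>
      Q k l * |(Ico (x k) M).indicator (1 : ℝ → ℝ) t - (Ico (w l) M).indicator 1 t| :=
    fun k l => (((integrable_indicator_Ico _ _).sub (integrable_indicator_Ico _ _)).abs).const_mul _
  rw [integral_finsetSum _ fun k _ => integrable_finsetSum _ fun l _ => hint k l]
  refine sum_congr rfl fun k _ => ?_
  rw [integral_finsetSum _ fun l _ => hint k l]
  refine sum_congr rfl fun l _ => ?_
  rw [integral_const_mul, integral_abs_indicator_Ico_sub (hx k) (hw l)]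

end TruncCdf

section LowerBound
variable {n m : ℕ} {a : Fin n → ℝ} {b : Fin m → ℝ}

lemma integral_abs_truncCdf_sub_le {x : Fin n → ℝ} {w : Fin m → ℝ} {M : ℝ}
    (hx : ∀ k, x k ≤ M) (hw : ∀ l, w l ≤ M) {P : Fin n → Fin m → ℝ}
    (hP : P ∈ transportPolytope a b) :
    ∫ t, |truncCdf a x M t - truncCdf b w M t| ≤ ∑ k, ∑ l, P k l * |x k - w l| := by
  obtain ⟨hP0, hProw, hPcol⟩ := hP
  rw [← integral_sum_sum_mul_abs_indicator_sub P hx hw]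
  refine integral_mono ((integrable_truncCdf _ _ _).sub (integrable_truncCdf _ _ _)).abs
    (integrable_finsetSum _ fun k _ => integrable_finsetSum _ fun l _ =>
      (((integrable_indicator_Ico _ _).sub (integrable_indicator_Ico _ _)).abs).const_mul _)
    fun t => ?_
  have hF : truncCdf a x M t = ∑ k, ∑ l, P k l * (Ico (x k) M).indicator 1 t := by
    simp only [truncCdf, ← sum_mul, hProw]
  have hG : truncCdf b w M t = ∑ k, ∑ l, P k l * (Ico (w l) M).indicator 1 t := by
    rw [sum_comm]
    simp only [truncCdf, ← sum_mul, hPcol]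
  rw [hF, hG, ← sum_sub_distrib]
  refine (abs_sum_le_sum_abs _ _).trans (sum_le_sum fun k _ => ?_)
  rw [← sum_sub_distrib]
  refine (abs_sum_le_sum_abs _ _).trans (sum_le_sum fun l _ => ?_)
  rw [← mul_sub, abs_mul, abs_of_nonneg (hP0 k l)]

end LowerBound

lemma sum_measureReal_inter_biUnion {α ι : Type*} [MeasurableSpace α] {μ : Measure α}
    {A : Set α} (hAm : MeasurableSet A) (hA : μ A ≠ ⊤) {J : ι → Set α}
    (hJ : Pairwise (Disjoint on J)) (hJm : ∀ r, MeasurableSet (J r)) (T : Finset ι) :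
    ∑ r ∈ T, μ.real (A ∩ J r) = μ.real (A ∩ ⋃ r ∈ T, J r) := by
  rw [inter_iUnion₂, measureReal_biUnion_finset
    (fun r _ r' _ h => (hJ h).mono inter_subset_right inter_subset_right)
    (fun r _ => hAm.inter (hJm r))
    (fun r _ => ne_top_of_le_ne_top hA (measure_mono inter_subset_left))]

section Tiling
variable {n : ℕ} {b : Fin n → ℝ}

def partialMass (b : Fin n → ℝ) (m : ℕ) : ℝ := ∑ p : Fin n with p.val < m, b p

def massInterval (b : Fin n → ℝ) (p : Fin n) : Set ℝ :=
  Ioc (partialMass b p) (partialMass b (p + 1))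

lemma partialMass_mono (hb : ∀ p, 0 ≤ b p) : Monotone (partialMass b) := fun _ _ h =>
  sum_le_sum_of_subset_of_nonneg (monotone_filter_right _ fun _ _ hp => hp.trans_le h)
    fun p _ _ => hb p

lemma partialMass_zero (b : Fin n → ℝ) : partialMass b 0 = 0 := by
  simp [partialMass]

lemma partialMass_succ (b : Fin n → ℝ) (p : Fin n) :
    partialMass b (p + 1) = partialMass b p + b p := by
  have : univ.filter (fun q : Fin n => q.val < p + 1)
      = insert p (univ.filter fun q : Fin n => q.val < p) := by
    ext q
    simp only [Finset.mem_filter, Finset.mem_univ, true_and, Finset.mem_insert, Fin.ext_iff]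
    omega
  rw [partialMass, this, sum_insert (by simp), add_comm]
  rfl

lemma measurableSet_massInterval (b : Fin n → ℝ) (p : Fin n) :
    MeasurableSet (massInterval b p) :=
  measurableSet_Ioc

lemma volume_massInterval_ne_top (b : Fin n → ℝ) (p : Fin n) :
    volume (massInterval b p) ≠ ⊤ := by
  simp [massInterval]

lemma volume_real_massInterval (hb : ∀ p, 0 ≤ b p) (p : Fin n) :
    volume.real (massInterval b p) = b p := by
  rw [massInterval, Real.volume_real_Ioc, partialMass_succ, add_sub_cancel_left,
    max_eq_left (hb p)]

lemma pairwise_disjoint_massInterval (hb : ∀ p, 0 ≤ b p) :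
    Pairwise (Disjoint on massInterval b) := by
  have h : ∀ p q : Fin n, p < q → Disjoint (massInterval b p) (massInterval b q) :=
    fun p q hpq => Ioc_disjoint_Ioc_of_le (partialMass_mono hb (Nat.succ_le_of_lt hpq))
  intro p q hpq
  rcases lt_or_gt_of_ne hpq with hlt | hgt
  exacts [h p q hlt, (h q p hgt).symm]

lemma biUnion_massInterval_lt (hb : ∀ p, 0 ≤ b p) {m : ℕ} (hm : m ≤ n) :
    ⋃ p ∈ univ.filter (fun p : Fin n => p.val < m), massInterval b p
      = Ioc 0 (partialMass b m) := by
  induction m with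
  | zero => simp [partialMass]
  | succ m ih =>
    have : univ.filter (fun p : Fin n => p.val < m + 1)
        = insert ⟨m, hm⟩ (univ.filter fun p : Fin n => p.val < m) := by
      ext q
      simp only [Finset.mem_filter, Finset.mem_univ, true_and, Finset.mem_insert, Fin.ext_iff]
      omega
    rw [this, Finset.set_biUnion_insert, ih (Nat.le_of_succ_le hm), Set.union_comm, massInterval]
    exact Set.Ioc_union_Ioc_eq_Ioc
      ((partialMass_zero b).symm.trans_le (partialMass_mono hb m.zero_le))
      (partialMass_mono hb m.le_succ)

lemma filter_le_eq_filter_lt_card {y : Fin n → ℝ} (hy : Monotone y) (t : ℝ) :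
    univ.filter (fun p => y p ≤ t)
      = univ.filter fun p : Fin n => p.val < #(univ.filter fun p => y p ≤ t) := by
  ext p
  simp only [Finset.mem_filter, Finset.mem_univ, true_and]
  constructor
  · intro hp
    rw [Nat.lt_iff_add_one_le, ← Fin.card_Iic]
    exact Finset.card_le_card fun q hq => by simpa using (hy (Finset.mem_Iic.1 hq)).trans hp
  · intro hp
    by_contra hpt
    have hsub : univ.filter (fun q => y q ≤ t) ⊆ Finset.Iio p := fun q hq =>
      Finset.mem_Iio.2 (lt_of_not_ge fun hpq => hpt ((hy hpq).trans (Finset.mem_filter.1 hq).2))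
    have := Finset.card_le_card hsub
    rw [Fin.card_Iio] at this
    omega

lemma biUnion_massInterval_of_monotone (hb : ∀ p, 0 ≤ b p) {y : Fin n → ℝ} (hy : Monotone y)
    (t : ℝ) :
    ⋃ p ∈ univ.filter (fun p => y p ≤ t), massInterval b p = Ioc 0 (∑ p with y p ≤ t, b p) := by
  rw [filter_le_eq_filter_lt_card hy,
    biUnion_massInterval_lt hb ((card_le_univ _).trans_eq (Fintype.card_fin n))]
  rfl

lemma biUnion_massInterval_univ (hb : ∀ p, 0 ≤ b p) :
    ⋃ p ∈ (univ : Finset (Fin n)), massInterval b p = Ioc 0 (∑ p, b p) := by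
  simpa using biUnion_massInterval_of_monotone hb (y := fun _ => 0) monotone_const 0

end Tiling

section QuantileCoupling
variable {n m : ℕ} {b : Fin n → ℝ} {c : Fin m → ℝ}

/-- For sorted atoms, this is the monotone (quantile) coupling of `b` and `c`. -/
def quantileCoupling (b : Fin n → ℝ) (c : Fin m → ℝ) (p : Fin n) (r : Fin m) : ℝ :=
  volume.real (massInterval b p ∩ massInterval c r)

lemma sum_sum_quantileCoupling (hb : ∀ p, 0 ≤ b p) (hc : ∀ r, 0 ≤ c r) (S : Finset (Fin n))
    (T : Finset (Fin m)) :
    ∑ p ∈ S, ∑ r ∈ T, quantileCoupling b c p r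
      = volume.real ((⋃ p ∈ S, massInterval b p) ∩ ⋃ r ∈ T, massInterval c r) := by
  have hUm : MeasurableSet (⋃ r ∈ T, massInterval c r) :=
    Finset.measurableSet_biUnion T fun r _ => measurableSet_massInterval c r
  have hU : volume (⋃ r ∈ T, massInterval c r) ≠ ⊤ :=
    (measure_biUnion_lt_top T.finite_toSet fun r _ => (volume_massInterval_ne_top c r).lt_top).ne
  calc ∑ p ∈ S, ∑ r ∈ T, quantileCoupling b c p r
      = ∑ p ∈ S, volume.real ((⋃ r ∈ T, massInterval c r) ∩ massInterval b p) :=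
        sum_congr rfl fun p _ => (sum_measureReal_inter_biUnion (measurableSet_massInterval b p)
          (volume_massInterval_ne_top b p) (pairwise_disjoint_massInterval hc)
          (measurableSet_massInterval c) T).trans (by rw [inter_comm])
    _ = _ := by
        rw [sum_measureReal_inter_biUnion hUm hU (pairwise_disjoint_massInterval hb)
          (measurableSet_massInterval b) S, inter_comm]

lemma quantileCoupling_mem_transportPolytope (hb : ∀ p, 0 ≤ b p) (hc : ∀ r, 0 ≤ c r)
    (hbc : ∑ p, b p = ∑ r, c r) : quantileCoupling b c ∈ transportPolytope b c := by
  refine ⟨fun p r => measureReal_nonneg, fun p => ?_, fun r => ?_⟩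
  · have h := sum_sum_quantileCoupling hb hc {p} univ
    rw [sum_singleton, Finset.set_biUnion_singleton, biUnion_massInterval_univ hc, ← hbc,
      ← biUnion_massInterval_univ hb,
      inter_eq_left.2 (Finset.subset_set_biUnion_of_mem (Finset.mem_univ p))] at h
    rw [h, volume_real_massInterval hb]
  · have h := sum_sum_quantileCoupling hb hc univ {r}
    simp only [sum_singleton] at h
    rw [h, Finset.set_biUnion_singleton, biUnion_massInterval_univ hb, hbc,
      ← biUnion_massInterval_univ hc,
      inter_eq_right.2 (Finset.subset_set_biUnion_of_mem (Finset.mem_univ r)),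
      volume_real_massInterval hc]

lemma sum_sum_quantileCoupling_mul_abs_indicator_sub (hb : ∀ p, 0 ≤ b p) (hc : ∀ r, 0 ≤ c r)
    (hbc : ∑ p, b p = ∑ r, c r) {y : Fin n → ℝ} {z : Fin m → ℝ} (hy : Monotone y)
    (hz : Monotone z) (M t : ℝ) :
    ∑ p, ∑ r, quantileCoupling b c p r
        * |(Ico (y p) M).indicator (1 : ℝ → ℝ) t - (Ico (z r) M).indicator 1 t|
      = |truncCdf b y M t - truncCdf c z M t| := by
  rcases le_or_gt M t with hMt | htM
  · simp [truncCdf, indicator_of_notMem, hMt]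
  obtain ⟨-, hQrow, hQcol⟩ := quantileCoupling_mem_transportPolytope hb hc hbc
  set Q := quantileCoupling b c
  -- On `0`/`1` values `|α - β| = α + β - 2 α β`, and the `α β` part of the sum is the mass of
  -- `(0, F t] ∩ (0, G t]`.
  have hsplit : ∀ p r, |(Ico (y p) M).indicator (1 : ℝ → ℝ) t - (Ico (z r) M).indicator 1 t|
      = (Ico (y p) M).indicator 1 t + (Ico (z r) M).indicator 1 t
        - 2 * (if y p ≤ t then (if z r ≤ t then 1 else 0) else 0) := fun p r => by
    simp only [indicator_Ico_of_lt htM]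
    split_ifs <;> norm_num
  have hF : ∑ p, ∑ r, Q p r * (Ico (y p) M).indicator 1 t = truncCdf b y M t := by
    simp only [truncCdf, ← sum_mul, hQrow]
  have hG : ∑ p, ∑ r, Q p r * (Ico (z r) M).indicator 1 t = truncCdf c z M t := by
    rw [sum_comm]
    simp only [truncCdf, ← sum_mul, hQcol]
  have hmin : ∑ p, ∑ r, Q p r * (if y p ≤ t then (if z r ≤ t then 1 else 0) else 0)
      = min (truncCdf b y M t) (truncCdf c z M t) := by
    have h := sum_sum_quantileCoupling hb hc {p | y p ≤ t} {r | z r ≤ t}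
    rw [biUnion_massInterval_of_monotone hb hy, biUnion_massInterval_of_monotone hc hz,
      Set.Ioc_inter_Ioc, Real.volume_real_Ioc, sup_idem, sub_zero] at h
    rw [truncCdf_of_lt b y htM, truncCdf_of_lt c z htM,
      ← max_eq_left (le_min (sum_nonneg fun p _ => hb p) (sum_nonneg fun r _ => hc r)), ← h]
    simp only [sum_filter, mul_ite, mul_one, mul_zero]
    refine sum_congr rfl fun p _ => ?_
    split_ifs <;> simp [Q]
  simp only [hsplit, mul_sub, mul_add, sum_sub_distrib, sum_add_distrib, hF, hG,
    mul_left_comm _ (2 : ℝ), ← mul_sum, hmin]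
  exact (abs_sub_eq_add_sub_two_mul_min _ _).symm

lemma sum_sum_quantileCoupling_mul_abs_sub (hb : ∀ p, 0 ≤ b p) (hc : ∀ r, 0 ≤ c r)
    (hbc : ∑ p, b p = ∑ r, c r) {y : Fin n → ℝ} {z : Fin m → ℝ} (hy : Monotone y)
    (hz : Monotone z) {M : ℝ} (hyM : ∀ p, y p ≤ M) (hzM : ∀ r, z r ≤ M) :
    ∑ p, ∑ r, quantileCoupling b c p r * |y p - z r|
      = ∫ t, |truncCdf b y M t - truncCdf c z M t| := by
  rw [← integral_sum_sum_mul_abs_indicator_sub _ hyM hzM]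
  congr with t
  exact sum_sum_quantileCoupling_mul_abs_indicator_sub hb hc hbc hy hz M t

end QuantileCoupling

section Wasserstein
variable {n m : ℕ} {a : Fin n → ℝ} {b : Fin m → ℝ}

lemma exists_mem_transportPolytope_cost_eq (ha : ∀ k, 0 ≤ a k) (hb : ∀ l, 0 ≤ b l)
    (hab : ∑ k, a k = ∑ l, b l) {x : Fin n → ℝ} {w : Fin m → ℝ} {M : ℝ} (hx : ∀ k, x k ≤ M)
    (hw : ∀ l, w l ≤ M) :
    ∃ P ∈ transportPolytope a b,
      ∑ k, ∑ l, P k l * |x k - w l| = ∫ t, |truncCdf a x M t - truncCdf b w M t| := by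
  set σ := Tuple.sort x
  set τ := Tuple.sort w
  have hab' : ∑ p, (a ∘ σ) p = ∑ r, (b ∘ τ) r :=
    (Equiv.sum_comp σ a).trans (hab.trans (Equiv.sum_comp τ b).symm)
  have hQ := quantileCoupling_mem_transportPolytope (b := a ∘ σ) (c := b ∘ τ) (fun p => ha _)
    (fun r => hb _) hab'
  have hcost := sum_sum_quantileCoupling_mul_abs_sub (b := a ∘ σ) (c := b ∘ τ) (fun p => ha _) (fun r => hb _)
    hab' (Tuple.monotone_sort x) (Tuple.monotone_sort w) (fun p => hx _) (fun r => hw _)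
  rw [truncCdf_comp_equiv, truncCdf_comp_equiv] at hcost
  refine ⟨fun k l => quantileCoupling (a ∘ σ) (b ∘ τ) (σ.symm k) (τ.symm l),
    ⟨fun k l => hQ.1 _ _, fun k => ?_, fun l => ?_⟩, ?_⟩
  · rw [Equiv.sum_comp τ.symm fun r => quantileCoupling (a ∘ σ) (b ∘ τ) (σ.symm k) r, hQ.2.1]
    simp
  · rw [Equiv.sum_comp σ.symm fun p => quantileCoupling (a ∘ σ) (b ∘ τ) p (τ.symm l), hQ.2.2]
    simp
  · rw [← hcost, ← Equiv.sum_comp σ]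
    refine sum_congr rfl fun p _ => ?_
    rw [← Equiv.sum_comp τ]
    simp only [Equiv.symm_apply_apply]
    rfl

theorem sInf_transportCost_eq_integral_abs_truncCdf_sub (ha : ∀ k, 0 ≤ a k)
    (hb : ∀ l, 0 ≤ b l) (hab : ∑ k, a k = ∑ l, b l) {x : Fin n → ℝ} {w : Fin m → ℝ} {M : ℝ}
    (hx : ∀ k, x k ≤ M) (hw : ∀ l, w l ≤ M) :
    sInf ((fun Q => ∑ k, ∑ l, Q k l * |x k - w l|) '' transportPolytope a b)
      = ∫ t, |truncCdf a x M t - truncCdf b w M t| := by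
  obtain ⟨P, hP, hPcost⟩ := exists_mem_transportPolytope_cost_eq ha hb hab hx hw
  refine IsLeast.csInf_eq ⟨⟨P, hP, hPcost⟩, ?_⟩
  rintro _ ⟨Q, hQ, rfl⟩
  exact integral_abs_truncCdf_sub_le hx hw hQ

end Wasserstein

section Energy
variable {E : Type*} [NormedAddCommGroup E] [InnerProductSpace ℝ E] {ι κ : Type*}
  [Fintype ι] [Fintype κ]

lemma sum_sum_mul_norm_sub_sq {a : ι → ℝ} {b : κ → ℝ} (ha : ∑ i, a i = 1) (hb : ∑ j, b j = 1)
    (x : ι → E) (y : κ → E) :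
    ∑ i, ∑ j, a i * b j * ‖x i - y j‖ ^ 2
      = ∑ i, a i * ‖x i‖ ^ 2 + ∑ j, b j * ‖y j‖ ^ 2
        - 2 * ⟪∑ i, a i • x i, ∑ j, b j • y j⟫ := by
  calc ∑ i, ∑ j, a i * b j * ‖x i - y j‖ ^ 2
      = ∑ i, ∑ j, (a i * ‖x i‖ ^ 2 * b j + a i * (b j * ‖y j‖ ^ 2)
          - 2 * ⟪a i • x i, b j • y j⟫) := by
        refine sum_congr rfl fun i _ => sum_congr rfl fun j _ => ?_
        rw [norm_sub_sq_real, real_inner_smul_left, real_inner_smul_right]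
        ring
    _ = _ := by
        rw [sum_inner]
        simp only [inner_sum, sum_add_distrib, sum_sub_distrib, ← mul_sum, ← sum_mul,
          ha, hb]
        ring

lemma energy_eq_two_mul_norm_sub_sq {a : ι → ℝ} {b : κ → ℝ} (ha : ∑ i, a i = 1)
    (hb : ∑ j, b j = 1) (x : ι → E) (y : κ → E) :
    2 * ∑ i, ∑ j, a i * b j * ‖x i - y j‖ ^ 2 - ∑ i, ∑ j, a i * a j * ‖x i - x j‖ ^ 2
        - ∑ i, ∑ j, b i * b j * ‖y i - y j‖ ^ 2
      = 2 * ‖∑ i, a i • x i - ∑ j, b j • y j‖ ^ 2 := by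
  rw [sum_sum_mul_norm_sub_sq ha hb, sum_sum_mul_norm_sub_sq ha ha, sum_sum_mul_norm_sub_sq hb hb,
    norm_sub_sq_real, real_inner_self_eq_norm_sq, real_inner_self_eq_norm_sq]
  ring

end Energy

lemma regionBetween_inter_regionBetween {α : Type*} (f g f' g' : α → ℝ) (s : Set α) :
    regionBetween f g s ∩ regionBetween f' g' s = regionBetween (f ⊔ f') (g ⊓ g') s := by
  ext p
  simp only [regionBetween, mem_inter_iff, mem_ofPred_eq, Set.mem_Ioo, Pi.sup_apply,
    Pi.inf_apply, max_lt_iff, lt_min_iff]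
  tauto

section Subgraph
variable {α : Type*} [MeasurableSpace α] {μ : Measure α} [SigmaFinite μ] {F G : α → ℝ}

lemma measure_regionBetween_zero_ne_top (hF : Integrable F μ) :
    μ.prod volume (regionBetween 0 F univ) ≠ ⊤ := by
  rw [volume_regionBetween_eq_lintegral (f := 0) aemeasurable_const hF.aemeasurable.restrict
    MeasurableSet.univ, Measure.restrict_univ]
  simpa using hF.lintegral_lt_top.ne

lemma measureReal_regionBetween_zero (hF : Integrable F μ) (hF0 : 0 ≤ F) :
    (μ.prod volume).real (regionBetween 0 F univ) = ∫ x, F x ∂μ := by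
  rw [measureReal_def, volume_regionBetween_eq_integral (f := 0) integrableOn_zero
    hF.integrableOn MeasurableSet.univ (fun x _ => hF0 x), setIntegral_univ, sub_zero,
    ENNReal.toReal_ofReal (integral_nonneg hF0)]

def subgraphVec (F : α → ℝ) (hFm : Measurable F) (hF : Integrable F μ) :
    Lp ℝ 2 (μ.prod (volume : Measure ℝ)) :=
  indicatorConstLp 2 (measurableSet_regionBetween measurable_zero hFm MeasurableSet.univ)
    (measure_regionBetween_zero_ne_top hF) 1

lemma inner_subgraphVec (hFm : Measurable F) (hF : Integrable F μ) (hF0 : 0 ≤ F)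
    (hGm : Measurable G) (hG : Integrable G μ) (hG0 : 0 ≤ G) :
    ⟪subgraphVec F hFm hF, subgraphVec G hGm hG⟫ = ∫ x, min (F x) (G x) ∂μ := by
  rw [subgraphVec, subgraphVec, L2.real_inner_indicatorConstLp_one_indicatorConstLp_one _ _
    (measure_regionBetween_zero_ne_top hF) (measure_regionBetween_zero_ne_top hG),
    regionBetween_inter_regionBetween, sup_idem]
  exact measureReal_regionBetween_zero (hF.inf hG) (le_inf hF0 hG0)

lemma norm_subgraphVec_sub_sq (hFm : Measurable F) (hF : Integrable F μ) (hF0 : 0 ≤ F)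
    (hGm : Measurable G) (hG : Integrable G μ) (hG0 : 0 ≤ G) :
    ‖subgraphVec F hFm hF - subgraphVec G hGm hG‖ ^ 2 = ∫ x, |F x - G x| ∂μ := by
  have habs : ∫ x, |F x - G x| ∂μ
      = ∫ x, F x ∂μ + ∫ x, G x ∂μ - 2 * ∫ x, min (F x) (G x) ∂μ := by
    rw [← integral_add hF hG, ← integral_const_mul,
      ← integral_sub (f := fun x => F x + G x) (g := fun x => 2 * min (F x) (G x))
        (hF.add hG) ((hF.inf hG).const_mul 2)]
    exact integral_congr_ae (ae_of_all _ fun x => abs_sub_eq_add_sub_two_mul_min _ _)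
  rw [norm_sub_sq_real, ← real_inner_self_eq_norm_sq, ← real_inner_self_eq_norm_sq,
    inner_subgraphVec hFm hF hF0 hGm hG hG0, inner_subgraphVec hFm hF hF0 hFm hF hF0,
    inner_subgraphVec hGm hG hG0 hGm hG hG0, habs]
  simp only [min_self]
  ring

end Subgraph

section Anchor
variable {n m : ℕ}

def anchorVec (a : Fin n → ℝ) (C : Fin n → Fin n → ℝ) (M : ℝ) (i : Fin n) :
    Lp ℝ 2 ((volume : Measure ℝ).prod (volume : Measure ℝ)) :=
  subgraphVec (truncCdf a (C i) M) (measurable_truncCdf _ _ _) (integrable_truncCdf _ _ _)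

lemma anchorW1_eq_norm_sub_sq {a : Fin n → ℝ} {b : Fin m → ℝ} (ha : IsProbVec a)
    (hb : IsProbVec b) {C : Fin n → Fin n → ℝ} {D : Fin m → Fin m → ℝ} {i : Fin n} {j : Fin m}
    {M : ℝ} (hC : ∀ k, C i k ≤ M) (hD : ∀ l, D j l ≤ M) :
    anchorW1 a b C D i j = ‖anchorVec a C M i - anchorVec b D M j‖ ^ 2 := by
  rw [anchorVec, anchorVec, norm_subgraphVec_sub_sq _ _ (truncCdf_nonneg ha.1 _ _) _ _
    (truncCdf_nonneg hb.1 _ _)]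
  exact sInf_transportCost_eq_integral_abs_truncCdf_sub ha.1 hb.1 (ha.2.trans hb.2.symm) hC hD

lemma AE1_eq_two_mul_norm_sub_sq {a : Fin n → ℝ} {b : Fin m → ℝ} (ha : IsProbVec a)
    (hb : IsProbVec b) {C : Fin n → Fin n → ℝ} {D : Fin m → Fin m → ℝ} {M : ℝ}
    (hC : ∀ i k, C i k ≤ M) (hD : ∀ j l, D j l ≤ M) :
    AE1 a b C D = 2 * ‖∑ i, a i • anchorVec a C M i - ∑ j, b j • anchorVec b D M j‖ ^ 2 := by
  have hab : ∀ i j, anchorW1 a b C D i j = ‖anchorVec a C M i - anchorVec b D M j‖ ^ 2 :=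
    fun i j => anchorW1_eq_norm_sub_sq ha hb (hC i) (hD j)
  have haa : ∀ i j, anchorW1 a a C C i j = ‖anchorVec a C M i - anchorVec a C M j‖ ^ 2 :=
    fun i j => anchorW1_eq_norm_sub_sq ha ha (hC i) (hC j)
  have hbb : ∀ i j, anchorW1 b b D D i j = ‖anchorVec b D M i - anchorVec b D M j‖ ^ 2 :=
    fun i j => anchorW1_eq_norm_sub_sq hb hb (hD i) (hD j)
  simp only [AE1, hab, haa, hbb]
  exact energy_eq_two_mul_norm_sub_sq ha.2 hb.2 _ _

end Anchor

end

theorem stmt12_general (n1 n2 n3 : ℕ)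
    (a1 : Fin n1 → ℝ) (a2 : Fin n2 → ℝ) (a3 : Fin n3 → ℝ)
    (ha1 : IsProbVec a1) (ha2 : IsProbVec a2) (ha3 : IsProbVec a3)
    (C1 : Fin n1 → Fin n1 → ℝ) (C2 : Fin n2 → Fin n2 → ℝ) (C3 : Fin n3 → Fin n3 → ℝ) :
    Real.sqrt (AE1 a1 a3 C1 C3) ≤ Real.sqrt (AE1 a1 a2 C1 C2) + Real.sqrt (AE1 a2 a3 C2 C3) := by
  obtain ⟨M, hM⟩ := Finite.exists_le
    fun p : (Fin n1 × Fin n1) ⊕ (Fin n2 × Fin n2) ⊕ (Fin n3 × Fin n3) =>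
      Sum.elim (fun q => C1 q.1 q.2) (Sum.elim (fun q => C2 q.1 q.2) fun q => C3 q.1 q.2) p
  have hM1 : ∀ i k, C1 i k ≤ M := fun i k => hM (.inl (i, k))
  have hM2 : ∀ i k, C2 i k ≤ M := fun i k => hM (.inr (.inl (i, k)))
  have hM3 : ∀ i k, C3 i k ≤ M := fun i k => hM (.inr (.inr (i, k)))
  rw [AE1_eq_two_mul_norm_sub_sq ha1 ha3 hM1 hM3, AE1_eq_two_mul_norm_sub_sq ha1 ha2 hM1 hM2,
    AE1_eq_two_mul_norm_sub_sq ha2 ha3 hM2 hM3]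
  simp only [Real.sqrt_mul' 2 (sq_nonneg _), Real.sqrt_sq (norm_nonneg _), ← mul_add]
  gcongr
  exact norm_sub_le_norm_sub_add_norm_sub _ _ _

theorem stmt12 (n1 n2 n3 : ℕ) (h1 : 1 ≤ n1) (h2 : 1 ≤ n2) (h3 : 1 ≤ n3)
    (a1 : Fin n1 → ℝ) (a2 : Fin n2 → ℝ) (a3 : Fin n3 → ℝ)
    (ha1 : IsProbVec a1) (ha2 : IsProbVec a2) (ha3 : IsProbVec a3)
    (C1 : Fin n1 → Fin n1 → ℝ) (C2 : Fin n2 → Fin n2 → ℝ) (C3 : Fin n3 → Fin n3 → ℝ) :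
    Real.sqrt (AE1 a1 a3 C1 C3) ≤ Real.sqrt (AE1 a1 a2 C1 C2) + Real.sqrt (AE1 a2 a3 C2 C3) :=
  stmt12_general n1 n2 n3 a1 a2 a3 ha1 ha2 ha3 C1 C2 C3
end

section
/- Let a¹ ∈ ℝ^n and a² ∈ ℝ^m be probability vectors and let C¹ ∈ ℝ^{n×n}, C² ∈ ℝ^{m×m}. Then the third lower bound is below the Gromov–Wasserstein value: inf_{P ∈ U(a¹,a²)} ∑_{i,k} P_{ik} · ( inf_{Q ∈ U(a¹,a²)} ∑_{j,l} Q_{jl} (C¹_{ij} − C²_{kl})² ) ≤ inf_{P ∈ U(a¹,a²)} ∑_{i,j,k,l} P_{ik} P_{jl} (C¹_{ij} − C²_{kl})². -/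
open Finset

theorem stmt13 (n m : ℕ) (hn : 1 ≤ n) (hm : 1 ≤ m)
    (a1 : Fin n → ℝ) (a2 : Fin m → ℝ) (ha1 : IsProbVec a1) (ha2 : IsProbVec a2)
    (C1 : Fin n → Fin n → ℝ) (C2 : Fin m → Fin m → ℝ) :
    sInf ((fun P => ∑ i, ∑ k, P i k *
          sInf ((fun Q => ∑ j, ∑ l, Q j l * (C1 i j - C2 k l) ^ 2) ''
            transportPolytope a1 a2)) '' transportPolytope a1 a2)
      ≤ sInf ((fun P => ∑ i, ∑ j, ∑ k, ∑ l, P i k * P j l * (C1 i j - C2 k l) ^ 2) ''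
          transportPolytope a1 a2) := by
  obtain ⟨ha1n, ha1s⟩ := ha1
  obtain ⟨ha2n, ha2s⟩ := ha2
  set U := transportPolytope a1 a2 with hU
  have hP0 : (fun i k => a1 i * a2 k) ∈ U := by
    refine ⟨fun i j => mul_nonneg (ha1n i) (ha2n j), fun i => ?_, fun j => ?_⟩
    · simp [← Finset.mul_sum, ha2s]
    · simp [← Finset.sum_mul, ha1s]
  have hUne : U.Nonempty := ⟨_, hP0⟩
  have hinner_nonneg : ∀ i k, ∀ y ∈ ((fun Q => ∑ j, ∑ l, Q j l * (C1 i j - C2 k l) ^ 2) '' U),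
      (0:ℝ) ≤ y := by
    rintro i k y ⟨Q, hQ, rfl⟩
    exact Finset.sum_nonneg fun j _ => Finset.sum_nonneg fun l _ =>
      mul_nonneg (hQ.1 j l) (sq_nonneg _)
  have hinf_nonneg : ∀ i k, (0:ℝ) ≤
      sInf ((fun Q => ∑ j, ∑ l, Q j l * (C1 i j - C2 k l) ^ 2) '' U) := by
    intro i k
    exact le_csInf (hUne.image _) (hinner_nonneg i k)
  apply le_csInf (hUne.image _)
  rintro y ⟨P, hP, rfl⟩
  have hstep1 : sInf ((fun P => ∑ i, ∑ k, P i k *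
        sInf ((fun Q => ∑ j, ∑ l, Q j l * (C1 i j - C2 k l) ^ 2) '' U)) '' U)
      ≤ ∑ i, ∑ k, P i k *
        sInf ((fun Q => ∑ j, ∑ l, Q j l * (C1 i j - C2 k l) ^ 2) '' U) := by
    apply csInf_le
    · refine ⟨0, ?_⟩
      rintro z ⟨R, hR, rfl⟩
      exact Finset.sum_nonneg fun i _ => Finset.sum_nonneg fun k _ =>
        mul_nonneg (hR.1 i k) (hinf_nonneg i k)
    · exact ⟨P, hP, rfl⟩
  refine hstep1.trans ?_
  have hstep2 : ∀ i k, sInf ((fun Q => ∑ j, ∑ l, Q j l * (C1 i j - C2 k l) ^ 2) '' U)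
      ≤ ∑ j, ∑ l, P j l * (C1 i j - C2 k l) ^ 2 := by
    intro i k
    exact csInf_le ⟨0, hinner_nonneg i k⟩ ⟨P, hP, rfl⟩
  calc ∑ i, ∑ k, P i k * sInf ((fun Q => ∑ j, ∑ l, Q j l * (C1 i j - C2 k l) ^ 2) '' U)
      ≤ ∑ i, ∑ k, P i k * (∑ j, ∑ l, P j l * (C1 i j - C2 k l) ^ 2) := by
        refine Finset.sum_le_sum fun i _ => Finset.sum_le_sum fun k _ => ?_
        exact mul_le_mul_of_nonneg_left (hstep2 i k) (hP.1 i k)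
    _ = ∑ i, ∑ j, ∑ k, ∑ l, P i k * P j l * (C1 i j - C2 k l) ^ 2 := by
        simp only [Finset.mul_sum, mul_assoc]
        exact Finset.sum_congr rfl fun i _ => Finset.sum_comm ..
end
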